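/- arXiv:1307.7581 — 4 statements merged into one kernel-verified Lean document; each statement's English description precedes it below -/
import Mathlib

section
/- Let ε > 0 and suppose (x, y, λ₁, λ₂) : I → ℝ⁴ is a differentiable curve on an open interval I satisfying the variational equations of the damped Duffing oscillator: ẋ = y + λ₁, ε·ẏ = x − x³ − y, λ̇₁ = (3x² − 1)·λ₂, ε·λ̇₂ = λ₂ − λ₁ on I. Then the function t ↦ λ₁(t)·y(t) + λ₁(t)²/2 + λ₂(t)·(x(t) − x(t)³ − y(t)) is constant on I. -/
/-! The variational equations are Hamilton's equations for
`H = λ₁ (y + λ₁ / 2) + μ (x - x³ - y) / ε`, where `μ = ε λ₂` is the momentum conjugate to `y`.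
Written in terms of `λ₂`, `H` is the quantity in the statement, so it is a first integral:
along a solution the terms of `ε · dH/dt` cancel in pairs. -/

noncomputable def duffingHamiltonian (x y l1 l2 : ℝ) : ℝ :=
  l1 * y + l1 ^ 2 / 2 + l2 * (x - x ^ 3 - y)

section

variable {x y l1 l2 : ℝ → ℝ} {x' y' l1' l2' t : ℝ}

theorem hasDerivAt_duffingHamiltonian (hx : HasDerivAt x x' t) (hy : HasDerivAt y y' t)
    (hl1 : HasDerivAt l1 l1' t) (hl2 : HasDerivAt l2 l2' t) :
    HasDerivAt (fun s ↦ duffingHamiltonian (x s) (y s) (l1 s) (l2 s))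
      (l1' * y t + l1 t * y' + l1 t * l1' + l2' * (x t - x t ^ 3 - y t)
        + l2 t * (x' - 3 * x t ^ 2 * x' - y')) t := by
  unfold duffingHamiltonian
  have hsq : HasDerivAt (fun s ↦ l1 s ^ 2 / 2) (l1 t * l1') t :=
    ((hl1.fun_pow 2).div_const 2).congr_deriv (by ring)
  have hcubic : HasDerivAt (fun s ↦ x s - x s ^ 3 - y s) (x' - 3 * x t ^ 2 * x' - y') t := by
    refine ((hx.fun_sub (hx.fun_pow 3)).fun_sub hy).congr_deriv ?_
    norm_num
  exact (((hl1.fun_mul hy).fun_add hsq).fun_add (hl2.fun_mul hcubic)).congr_deriv (by ring)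

theorem hasDerivAt_duffingHamiltonian_eq_zero {ε : ℝ} (hε : ε ≠ 0)
    (hx : HasDerivAt x x' t) (hy : HasDerivAt y y' t)
    (hl1 : HasDerivAt l1 l1' t) (hl2 : HasDerivAt l2 l2' t)
    (heqx : x' = y t + l1 t) (heqy : ε * y' = x t - x t ^ 3 - y t)
    (heql1 : l1' = (3 * x t ^ 2 - 1) * l2 t) (heql2 : ε * l2' = l2 t - l1 t) :
    HasDerivAt (fun s ↦ duffingHamiltonian (x s) (y s) (l1 s) (l2 s)) 0 t := by
  convert hasDerivAt_duffingHamiltonian hx hy hl1 hl2 using 1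
  refine ((mul_eq_zero.mp ?_).resolve_left hε).symm
  linear_combination ε * (y t + l1 t) * heql1 + ε * l2 t * (1 - 3 * x t ^ 2) * heqx
    + (l1 t - l2 t) * heqy + (x t - x t ^ 3 - y t) * heql2

end

/-- Along any differentiable solution of the variational equations of the damped Duffing
oscillator `ẋ = y + λ₁`, `ε·ẏ = x − x³ − y`, `λ̇₁ = (3x² − 1)·λ₂`, `ε·λ̇₂ = λ₂ − λ₁`
on an open interval `I = (a,b)`, the Hamiltonian
`λ₁·y + λ₁²/2 + λ₂·(x − x³ − y)` is constant. -/
theorem stmt4 (ε : ℝ) (hε : 0 < ε) (a b : ℝ)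
    (x y l1 l2 : ℝ → ℝ)
    (hx : ∀ t ∈ Set.Ioo a b, DifferentiableAt ℝ x t)
    (hy : ∀ t ∈ Set.Ioo a b, DifferentiableAt ℝ y t)
    (hl1 : ∀ t ∈ Set.Ioo a b, DifferentiableAt ℝ l1 t)
    (hl2 : ∀ t ∈ Set.Ioo a b, DifferentiableAt ℝ l2 t)
    (heqx : ∀ t ∈ Set.Ioo a b, deriv x t = y t + l1 t)
    (heqy : ∀ t ∈ Set.Ioo a b, ε * deriv y t = x t - (x t) ^ 3 - y t)
    (heql1 : ∀ t ∈ Set.Ioo a b, deriv l1 t = (3 * (x t) ^ 2 - 1) * l2 t)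
    (heql2 : ∀ t ∈ Set.Ioo a b, ε * deriv l2 t = l2 t - l1 t) :
    ∃ c : ℝ, ∀ t ∈ Set.Ioo a b,
      l1 t * y t + (l1 t) ^ 2 / 2 + l2 t * (x t - (x t) ^ 3 - y t) = c := by
  have hconserved : ∀ t ∈ Set.Ioo a b,
      HasDerivAt (fun s ↦ duffingHamiltonian (x s) (y s) (l1 s) (l2 s)) 0 t := fun t ht ↦
    hasDerivAt_duffingHamiltonian_eq_zero hε.ne' (hx t ht).hasDerivAt (hy t ht).hasDerivAt
      (hl1 t ht).hasDerivAt (hl2 t ht).hasDerivAt (heqx t ht) (heqy t ht) (heql1 t ht)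
      (heql2 t ht)
  exact isOpen_Ioo.exists_is_const_of_deriv_eq_zero isPreconnected_Ioo
    (fun t ht ↦ (hconserved t ht).differentiableAt.differentiableWithinAt)
    (fun t ht ↦ (hconserved t ht).deriv)
end

section
/- Define φ : ℝ → ℝ by φ(t) = −(1 + e^{2t})^{−1/2} and λ* : ℝ → ℝ by λ*(t) = 2·(φ(t)³ − φ(t)). Then (φ, λ*) is differentiable and solves the slow equations of the Duffing variational system for all t ∈ ℝ: φ′(t) = φ(t) − φ(t)³ + λ*(t) and (λ*)′(t) = (3·φ(t)² − 1)·λ*(t). -/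
/-!
With `u = 1 + e^{2t}` we have `u' = 2(u - 1)`, so `φ = -u^{-1/2}` satisfies
`φ' = u^{-3/2}(u - 1) = u^{-1/2} - u^{-3/2} = φ³ - φ`. On the zero-level curve
`λ = 2(x³ - x)` the first slow equation reads `ẋ = x³ - x`, and then `λ = 2ẋ`, so the
second one is the derivative of `ẋ = x³ - x` multiplied by 2.
-/

open Real

lemma rpow_neg_half_pow_three {u : ℝ} (hu : 0 < u) :
    (u ^ (-(1 / 2) : ℝ)) ^ 3 = u ^ (-(1 / 2) - 1 : ℝ) := by
  rw [← rpow_natCast, ← rpow_mul hu.le]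
  norm_num

lemma mul_rpow_neg_half_sq {u : ℝ} (hu : 0 < u) : u * (u ^ (-(1 / 2) : ℝ)) ^ 2 = 1 := by
  rw [← rpow_natCast, ← rpow_mul hu.le, show (-(1 / 2) : ℝ) * (2 : ℕ) = -1 by norm_num,
    rpow_neg_one, mul_inv_cancel₀ hu.ne']

lemma hasDerivAt_neg_rpow_neg_half_one_add_exp (t : ℝ) :
    HasDerivAt (fun t : ℝ => -((1 + exp (2 * t)) ^ (-(1 / 2) : ℝ)))
      ((-((1 + exp (2 * t)) ^ (-(1 / 2) : ℝ))) ^ 3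
        - (-((1 + exp (2 * t)) ^ (-(1 / 2) : ℝ)))) t := by
  have hu : 0 < 1 + exp (2 * t) := by positivity
  have hu_deriv : HasDerivAt (fun t : ℝ => 1 + exp (2 * t)) (2 * ((1 + exp (2 * t)) - 1)) t :=
    (((hasDerivAt_id t).const_mul 2).exp.const_add 1).congr_deriv
      (by simp only [id_eq, mul_one, add_sub_cancel_left]; ring)
  refine (hu_deriv.rpow_const (Or.inl hu.ne')).fun_neg.congr_deriv ?_
  rw [← rpow_neg_half_pow_three hu]
  linear_combination ((1 + exp (2 * t)) ^ (-(1 / 2) : ℝ)) * mul_rpow_neg_half_sq hu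

lemma hasDerivAt_two_mul_cube_sub {x : ℝ → ℝ} {t : ℝ}
    (hx : HasDerivAt x (x t ^ 3 - x t) t) :
    HasDerivAt (fun t => 2 * (x t ^ 3 - x t))
      ((3 * x t ^ 2 - 1) * (2 * (x t ^ 3 - x t))) t :=
  (((hx.fun_pow 3).fun_sub hx).const_mul 2).congr_deriv (by push_cast; ring)

/-- The pair `φ(t) = −(1 + e^{2t})^{−1/2}`, `λ*(t) = 2(φ(t)³ − φ(t))` is a differentiable
solution of the slow equations `ẋ = x − x³ + λ`, `λ̇ = (3x² − 1)·λ` of the Duffing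
variational system on all of `ℝ`. -/
theorem stmt7 (φ lstar : ℝ → ℝ)
    (hφ : ∀ t, φ t = -((1 + Real.exp (2 * t)) ^ (-(1 / 2) : ℝ)))
    (hl : ∀ t, lstar t = 2 * ((φ t) ^ 3 - φ t)) :
    Differentiable ℝ φ ∧ Differentiable ℝ lstar ∧
    (∀ t : ℝ, deriv φ t = φ t - (φ t) ^ 3 + lstar t) ∧
    (∀ t : ℝ, deriv lstar t = (3 * (φ t) ^ 2 - 1) * lstar t) := by
  obtain rfl : φ = _ := funext hφ
  obtain rfl : lstar = _ := funext hl
  have hφ' := hasDerivAt_neg_rpow_neg_half_one_add_exp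
  have hl' := fun t => hasDerivAt_two_mul_cube_sub (hφ' t)
  refine ⟨fun t => (hφ' t).differentiableAt, fun t => (hl' t).differentiableAt,
    fun t => ?_, fun t => (hl' t).deriv⟩
  rw [(hφ' t).deriv]
  ring
end

section
/- Define φ : ℝ → ℝ by φ(t) = −(1 + e^{2t})^{−1/2}. Then the function t ↦ 2·(φ(t)³ − φ(t))² is integrable on ℝ and ∫_{−∞}^{∞} 2·(φ(t)³ − φ(t))² dt = 1/2. -/
/-!
Since `φ(t)² = (1 + e^{2t})⁻¹ = σ(-2t)` for the logistic function `σ`, and `1 - σ(-2t) = σ(2t)`,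
the integrand `2(φ³ - φ)² = 2 φ² (1 - φ²)²` equals `2 σ(2t)² σ(-2t)`, which is the derivative of
`σ(2t)² / 2` because `σ' = σ (1 - σ)`. This primitive increases from `0` at `-∞` to `1/2` at `+∞`;
a nonnegative derivative of a function with finite limits at both ends is integrable, and its
integral is the difference of the limits.
-/

open Real MeasureTheory Filter Topology

theorem MeasureTheory.integrable_of_hasDerivAt_of_nonneg {g g' : ℝ → ℝ} {a b : ℝ}
    (hderiv : ∀ x, HasDerivAt g (g' x) x) (hg' : ∀ x, 0 ≤ g' x)
    (hbot : Tendsto g atBot (𝓝 a)) (htop : Tendsto g atTop (𝓝 b)) : Integrable g' := by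
  have hint : ∀ r s, IntervalIntegrable g' volume r s := fun r s =>
    intervalIntegral.intervalIntegrable_deriv_of_nonneg
      (fun x _ => (hderiv x).continuousAt.continuousWithinAt) (fun x _ => hderiv x)
      (fun x _ => hg' x)
  refine integrable_of_intervalIntegral_norm_tendsto (b - a) (fun r => (hint (-r) r).1)
    tendsto_neg_atTop_atBot tendsto_id ?_
  have hFTC : ∀ r, ∫ x in -r..r, ‖g' x‖ = g r - g (-r) := fun r => by
    simp_rw [Real.norm_of_nonneg (hg' _)]
    exact intervalIntegral.integral_eq_sub_of_hasDerivAt (fun x _ => hderiv x) (hint _ _)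
  simp_rw [hFTC]
  exact htop.sub (hbot.comp tendsto_neg_atTop_atBot)

theorem Real.hasDerivAt_sigmoid_two_mul_sq_div_two (t : ℝ) :
    HasDerivAt (fun t => sigmoid (2 * t) ^ 2 / 2) (2 * sigmoid (2 * t) ^ 2 * sigmoid (-(2 * t)))
      t := by
  have hσ : HasDerivAt (fun t => sigmoid (2 * t))
      (sigmoid (2 * t) * (1 - sigmoid (2 * t)) * 2) t := by
    have h := (hasDerivAt_sigmoid (2 * t)).comp t ((hasDerivAt_id t).const_mul 2)
    rw [mul_one] at h
    exact h
  refine ((hσ.pow 2).div_const 2).congr_deriv ?_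
  rw [sigmoid_neg]
  ring

theorem Real.sq_rpow_neg_one_half {x : ℝ} (hx : 0 ≤ x) : (x ^ (-(1 / 2) : ℝ)) ^ 2 = x⁻¹ := by
  rw [← rpow_natCast, ← rpow_mul hx]
  norm_num [rpow_neg_one]

/-- The action of the optimal noise along the optimal path: with
`φ(t) = −(1 + e^{2t})^{−1/2}`, the function `t ↦ 2(φ(t)³ − φ(t))²` is integrable on `ℝ`
and `∫_{−∞}^{∞} 2(φ(t)³ − φ(t))² dt = 1/2`. -/
theorem stmt12 (φ : ℝ → ℝ)
    (hφ : ∀ t, φ t = -((1 + Real.exp (2 * t)) ^ (-(1 / 2) : ℝ))) :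
    MeasureTheory.Integrable (fun t => 2 * ((φ t) ^ 3 - φ t) ^ 2) ∧
    ∫ t : ℝ, 2 * ((φ t) ^ 3 - φ t) ^ 2 = 1 / 2 := by
  have hsq : ∀ t, φ t ^ 2 = sigmoid (-(2 * t)) := fun t => by
    rw [hφ, neg_sq, sq_rpow_neg_one_half (by positivity), sigmoid_def, neg_neg]
  have hintegrand : (fun t => 2 * (φ t ^ 3 - φ t) ^ 2) =
      fun t => 2 * sigmoid (2 * t) ^ 2 * sigmoid (-(2 * t)) := funext fun t => by
    rw [show φ t ^ 3 - φ t = -(φ t * (1 - φ t ^ 2)) by ring, neg_sq, mul_pow, hsq, sigmoid_neg]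
    ring
  have h2t : Tendsto (fun t : ℝ => 2 * t) atTop atTop := tendsto_id.const_mul_atTop two_pos
  have h2t' : Tendsto (fun t : ℝ => 2 * t) atBot atBot := tendsto_id.const_mul_atBot two_pos
  have hbot : Tendsto (fun t => sigmoid (2 * t) ^ 2 / 2) atBot (𝓝 0) := by
    simpa using ((tendsto_sigmoid_atBot.comp h2t').pow 2).div_const 2
  have htop : Tendsto (fun t => sigmoid (2 * t) ^ 2 / 2) atTop (𝓝 (1 / 2)) := by
    simpa using ((tendsto_sigmoid_atTop.comp h2t).pow 2).div_const 2
  have hint := integrable_of_hasDerivAt_of_nonneg hasDerivAt_sigmoid_two_mul_sq_div_two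
    (fun t => by have := sigmoid_nonneg (-(2 * t)); positivity) hbot htop
  rw [hintegrand]
  refine ⟨hint, ?_⟩
  rw [integral_of_hasDerivAt_of_tendsto hasDerivAt_sigmoid_two_mul_sq_div_two hint hbot htop]
  norm_num
end

section
/- In the multivariate polynomial ring ℝ[X, L, E] (with X, L, E representing x, λ₁, ε), define h = X − X³ − E·(X + L − 4X³ − 3X²L) + E²·(2X + L) and k = L + E·(3X²L − L) + E²·(2L + 6XL²) − 5LE³, and define the residual R_h = (∂h/∂X)·E·(h + L) + (∂h/∂L)·E·(3X² − 1)·k − (X − X³ − h). Then every monomial occurring in R_h (i.e., every element of its support) has total degree at least 4. -/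
open MvPolynomial

set_option maxRecDepth 8000
set_option maxHeartbeats 1600000

lemma pderiv_ofNat' (i : Fin 3) (n : ℕ) [n.AtLeastTwo] :
    pderiv i (OfNat.ofNat n : MvPolynomial (Fin 3) ℝ) = 0 := by
  rw [show (OfNat.ofNat n : MvPolynomial (Fin 3) ℝ) = C (OfNat.ofNat n)
    from (map_ofNat C n).symm, pderiv_C]

lemma term_deg4 (c : ℝ) (a b e : ℕ) (h4 : 4 ≤ a + b + e) :
    ∀ d ∈ (C c * X 0 ^ a * X 1 ^ b * X 2 ^ e : MvPolynomial (Fin 3) ℝ).support,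
      4 ≤ d.sum fun _ n => n := by
  intro d hd
  have heq : (C c * X 0 ^ a * X 1 ^ b * X 2 ^ e : MvPolynomial (Fin 3) ℝ)
      = monomial (Finsupp.single 0 a + Finsupp.single 1 b + Finsupp.single 2 e) c := by
    rw [X_pow_eq_monomial, X_pow_eq_monomial, X_pow_eq_monomial, C_apply,
      monomial_mul, monomial_mul, monomial_mul]
    simp
  rw [heq] at hd
  have hsub := support_monomial_subset hd
  simp only [Finset.mem_singleton] at hsub
  subst hsub
  rw [Finsupp.sum_add_index (by simp) (by simp),
      Finsupp.sum_add_index (by simp) (by simp)]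
  simpa using h4

lemma add_deg4 {p q : MvPolynomial (Fin 3) ℝ}
    (hp : ∀ d ∈ p.support, 4 ≤ d.sum fun _ n => n)
    (hq : ∀ d ∈ q.support, 4 ≤ d.sum fun _ n => n) :
    ∀ d ∈ (p + q).support, 4 ≤ d.sum fun _ n => n := by
  intro d hd
  rcases Finset.mem_union.mp (MvPolynomial.support_add hd) with h | h
  · exact hp d h
  · exact hq d h

/-- The fourth-order polynomial center manifold approximations `h`, `k` for the rescaled
layer equations of the Duffing variational system satisfy the center manifold invariance
condition for `h` up to terms of total degree at least 4 (variables `X ↔ x`, `L ↔ λ₁`,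
`E ↔ ε`, each counted with weight 1). -/
theorem stmt14 (h k Rh : MvPolynomial (Fin 3) ℝ)
    (hh : h = X 0 - (X 0) ^ 3
        - X 2 * (X 0 + X 1 - 4 * (X 0) ^ 3 - 3 * (X 0) ^ 2 * X 1)
        + (X 2) ^ 2 * (2 * X 0 + X 1))
    (hk : k = X 1 + X 2 * (3 * (X 0) ^ 2 * X 1 - X 1)
        + (X 2) ^ 2 * (2 * X 1 + 6 * X 0 * (X 1) ^ 2)
        - 5 * X 1 * (X 2) ^ 3)
    (hRh : Rh = pderiv (0 : Fin 3) h * (X 2 * (h + X 1))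
        + pderiv (1 : Fin 3) h * (X 2 * (3 * (X 0) ^ 2 - 1) * k)
        - (X 0 - (X 0) ^ 3 - h)) :
    ∀ d ∈ Rh.support, 4 ≤ d.sum fun _ e => e := by
  have hd0 : pderiv (0 : Fin 3) h
      = 1 - 3 * (X 0) ^ 2 - X 2 * (1 - 12 * (X 0) ^ 2 - 6 * X 0 * X 1)
        + (X 2) ^ 2 * 2 := by
    subst hh
    simp only [map_add, map_sub, Derivation.leibniz, Derivation.leibniz_pow, pderiv_X_self,
      pderiv_X_of_ne (show (2:Fin 3) ≠ 0 by decide),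
      pderiv_X_of_ne (show (1:Fin 3) ≠ 0 by decide),
      pderiv_ofNat' 0 2, pderiv_ofNat' 0 3, pderiv_ofNat' 0 4,
      map_mul, pderiv_C, smul_eq_mul, map_one]
    ring
  have hd1 : pderiv (1 : Fin 3) h
      = - X 2 * (1 - 3 * (X 0) ^ 2) + (X 2) ^ 2 := by
    subst hh
    simp only [map_add, map_sub, Derivation.leibniz, Derivation.leibniz_pow, pderiv_X_self,
      pderiv_X_of_ne (show (2:Fin 3) ≠ 1 by decide),
      pderiv_X_of_ne (show (0:Fin 3) ≠ 1 by decide),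
      pderiv_ofNat' 1 2, pderiv_ofNat' 1 3, pderiv_ofNat' 1 4,
      map_mul, pderiv_C, smul_eq_mul, map_one]
    ring
  have key : Rh =
      C (2:ℝ) * X 0 ^ 0 * X 1 ^ 1 * X 2 ^ 3 +
      C (-5:ℝ) * X 0 ^ 0 * X 1 ^ 1 * X 2 ^ 5 +
      C (5:ℝ) * X 0 ^ 0 * X 1 ^ 1 * X 2 ^ 6 +
      C (5:ℝ) * X 0 ^ 1 * X 1 ^ 0 * X 2 ^ 3 +
      C (-4:ℝ) * X 0 ^ 1 * X 1 ^ 0 * X 2 ^ 4 +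
      C (4:ℝ) * X 0 ^ 1 * X 1 ^ 0 * X 2 ^ 5 +
      C (6:ℝ) * X 0 ^ 1 * X 1 ^ 2 * X 2 ^ 2 +
      C (-6:ℝ) * X 0 ^ 1 * X 1 ^ 2 * X 2 ^ 3 +
      C (12:ℝ) * X 0 ^ 1 * X 1 ^ 2 * X 2 ^ 4 +
      C (-6:ℝ) * X 0 ^ 1 * X 1 ^ 2 * X 2 ^ 5 +
      C (18:ℝ) * X 0 ^ 2 * X 1 ^ 1 * X 2 ^ 2 +
      C (-12:ℝ) * X 0 ^ 2 * X 1 ^ 1 * X 2 ^ 3 +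
      C (12:ℝ) * X 0 ^ 2 * X 1 ^ 1 * X 2 ^ 4 +
      C (36:ℝ) * X 0 ^ 2 * X 1 ^ 1 * X 2 ^ 5 +
      C (-15:ℝ) * X 0 ^ 2 * X 1 ^ 1 * X 2 ^ 6 +
      C (20:ℝ) * X 0 ^ 3 * X 1 ^ 0 * X 2 ^ 2 +
      C (-24:ℝ) * X 0 ^ 3 * X 1 ^ 0 * X 2 ^ 3 +
      C (32:ℝ) * X 0 ^ 3 * X 1 ^ 0 * X 2 ^ 4 +
      C (18:ℝ) * X 0 ^ 3 * X 1 ^ 2 * X 2 ^ 3 +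
      C (-36:ℝ) * X 0 ^ 3 * X 1 ^ 2 * X 2 ^ 4 +
      C (18:ℝ) * X 0 ^ 3 * X 1 ^ 2 * X 2 ^ 5 +
      C (-6:ℝ) * X 0 ^ 4 * X 1 ^ 1 * X 2 ^ 2 +
      C (33:ℝ) * X 0 ^ 4 * X 1 ^ 1 * X 2 ^ 3 +
      C (27:ℝ) * X 0 ^ 4 * X 1 ^ 1 * X 2 ^ 4 +
      C (-45:ℝ) * X 0 ^ 4 * X 1 ^ 1 * X 2 ^ 5 +
      C (3:ℝ) * X 0 ^ 5 * X 1 ^ 0 * X 2 ^ 1 +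
      C (-24:ℝ) * X 0 ^ 5 * X 1 ^ 0 * X 2 ^ 2 +
      C (48:ℝ) * X 0 ^ 5 * X 1 ^ 0 * X 2 ^ 3 +
      C (54:ℝ) * X 0 ^ 5 * X 1 ^ 2 * X 2 ^ 4 +
      C (27:ℝ) * X 0 ^ 6 * X 1 ^ 1 * X 2 ^ 3 := by
    rw [hRh, hd0, hd1, hh, hk]
    simp only [C_eq_coe_nat, map_ofNat, C_neg]
    ring
  rw [key]
  repeat' apply add_deg4
  all_goals exact term_deg4 _ _ _ _ (by norm_num)
end
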